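/- Let B be a dilation matrix, K_B a set of digits for B, 𝕋^d = [−π,π]^d, and Q₀ = ⋃_{μ∈K_B} B^{-1}(𝕋^d + 2μπ). Then the translates {Q₀ + 2kπ : k ∈ ℤ^d} tile ℝ^d up to measure zero; in particular for every f ∈ L¹(ℝ^d), ∫_{ℝ^d} f(x) dx = ∫_{Q₀} ∑_{k∈ℤ^d} f(x+2kπ) dx. -/

import Mathlib

open MeasureTheory Matrix Filter Topology Complex

noncomputable section

/-- A dilation matrix: an integer matrix all of whose (complex) eigenvalues,
i.e. roots of its characteristic polynomial over `ℂ`, have modulus `> 1`.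
(Such a matrix automatically maps `ℤ^d` into `ℤ^d`.) -/
def IsDilationMatrix {d : ℕ} (A : Matrix (Fin d) (Fin d) ℤ) : Prop :=
  ∀ μ ∈ (A.map ((↑) : ℤ → ℂ)).charpoly.roots, 1 < ‖μ‖

/-- A set of digits for `A`: a subset of `ℤ^d` containing exactly one
representative of each coset of `Aℤ^d` in `ℤ^d`. -/
def IsDigitSet {d : ℕ} (A : Matrix (Fin d) (Fin d) ℤ) (K : Set (Fin d → ℤ)) : Prop :=
  ∀ x : Fin d → ℤ, ∃! k, k ∈ K ∧ ∃ y : Fin d → ℤ, x = A.mulVec y + k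


/-- The integer vector `k` viewed as a real vector. -/
def castv {d : ℕ} (k : Fin d → ℤ) : Fin d → ℝ := fun i => (k i : ℝ)

lemma det_ne_zero' {d : ℕ} {B : Matrix (Fin d) (Fin d) ℤ} (hB : IsDilationMatrix B) :
    (B.map ((↑) : ℤ → ℝ)).det ≠ 0 := by
  have h1 : (B.map ((↑) : ℤ → ℝ)).det = ((B.det : ℤ) : ℝ) :=
    ((Int.castRingHom ℝ).map_det B).symm
  rw [h1]
  intro h
  have hz : B.det = 0 := by exact_mod_cast h
  have h2 : (B.map ((↑) : ℤ → ℂ)).det = 0 := by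
    rw [show (B.map ((↑) : ℤ → ℂ)).det = ((B.det : ℤ) : ℂ) from
      ((Int.castRingHom ℂ).map_det B).symm, hz]; simp
  have h3 : (B.map ((↑) : ℤ → ℂ)).charpoly.eval 0 = 0 := by
    rw [← Polynomial.coeff_zero_eq_eval_zero]
    have h4 := Matrix.det_eq_sign_charpoly_coeff (B.map ((↑) : ℤ → ℂ))
    rw [h2, eq_comm, mul_eq_zero] at h4
    rcases h4 with h4 | h4
    · exact absurd h4 (pow_ne_zero _ (by norm_num))
    · exact h4
  have hmem : (0 : ℂ) ∈ (B.map ((↑) : ℤ → ℂ)).charpoly.roots := by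
    rw [Polynomial.mem_roots ((Matrix.charpoly_monic _).ne_zero)]
    exact h3
  have h5 := hB 0 hmem
  rw [norm_zero] at h5
  exact absurd h5 (by norm_num)



namespace Helpers

variable {d : ℕ}

lemma castv_add (m k : Fin d → ℤ) : castv (m + k) = castv m + castv k := by
  funext i; simp [castv]

lemma castv_mulVec (B : Matrix (Fin d) (Fin d) ℤ) (k : Fin d → ℤ) :
    castv (B.mulVec k) = (B.map ((↑) : ℤ → ℝ)).mulVec (castv k) := by
  funext i
  simp [castv, Matrix.mulVec, dotProduct, Matrix.map]

lemma castv_inj : Function.Injective (castv (d := d)) := by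
  intro m m' h
  funext i
  have h2 := congrFun h i
  simp only [castv] at h2
  exact_mod_cast h2

variable {A : Matrix (Fin d) (Fin d) ℝ}

lemma mulVec_left_inv (hA : A.det ≠ 0) (x : Fin d → ℝ) : A⁻¹.mulVec (A.mulVec x) = x := by
  rw [Matrix.mulVec_mulVec, Matrix.nonsing_inv_mul A (isUnit_iff_ne_zero.mpr hA),
    Matrix.one_mulVec]

lemma mulVec_right_inv (hA : A.det ≠ 0) (x : Fin d → ℝ) : A.mulVec (A⁻¹.mulVec x) = x := by
  rw [Matrix.mulVec_mulVec, Matrix.mul_nonsing_inv A (isUnit_iff_ne_zero.mpr hA),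
    Matrix.one_mulVec]

lemma image_inv_eq_preimage (hA : A.det ≠ 0) (S : Set (Fin d → ℝ)) :
    (fun x => A⁻¹.mulVec x) '' S = A.mulVec ⁻¹' S := by
  ext y
  constructor
  · rintro ⟨x, hx, rfl⟩
    simpa [mulVec_right_inv hA] using hx
  · intro hy
    exact ⟨A.mulVec y, hy, mulVec_left_inv hA y⟩

lemma shift_preimage (S : Set (Fin d → ℝ)) (w : Fin d → ℝ) :
    (fun x => x + w) '' (A.mulVec ⁻¹' S) = A.mulVec ⁻¹' ((fun y => y + A.mulVec w) '' S) := by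
  ext y
  constructor
  · rintro ⟨x, hx, rfl⟩
    exact ⟨A.mulVec x, hx, by rw [Matrix.mulVec_add]⟩
  · rintro ⟨z, hz, hzy⟩
    refine ⟨y - w, ?_, by simp⟩
    have h3 : A.mulVec (y - w) = z := by
      rw [Matrix.mulVec_sub]
      simp only at hzy
      rw [← hzy]; abel
    simp [Set.mem_preimage, h3, hz]

lemma hyper_null (i : Fin d) (a : ℝ) : volume {x : Fin d → ℝ | x i = a} = 0 := by
  classical
  have h : {x : Fin d → ℝ | x i = a}
      = Set.pi Set.univ (fun j => if j = i then {a} else Set.univ) := by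
    ext x
    simp only [Set.mem_setOf_eq, Set.mem_pi, Set.mem_univ, forall_true_left]
    constructor
    · intro h j
      by_cases hj : j = i
      · subst hj; simp [h]
      · simp [hj]
    · intro h
      have := h i
      simpa using this
  rw [h, volume_pi_pi]
  apply Finset.prod_eq_zero (Finset.mem_univ i)
  simp

lemma preimage_null (hA : A.det ≠ 0) (N : Set (Fin d → ℝ)) (hN : volume N = 0) :
    volume (A.mulVec ⁻¹' N) = 0 := by
  have h1 : A.mulVec ⁻¹' N = (Matrix.toLin' A) ⁻¹' N := by
    ext x; simp [Matrix.toLin'_apply]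
  have hdet : LinearMap.det (Matrix.toLin' A) ≠ 0 := by
    rw [LinearMap.det_toLin']; exact hA
  rw [h1, Measure.addHaar_preimage_linearMap volume hdet, hN, mul_zero]



def Td (d : ℕ) : Set (Fin d → ℝ) := Set.univ.pi fun _ => Set.Icc (-Real.pi) Real.pi

lemma mem_shiftT (v x : Fin d → ℝ) :
    x ∈ (fun y => y + v) '' Td d ↔ ∀ i, x i - v i ∈ Set.Icc (-Real.pi) Real.pi := by
  constructor
  · rintro ⟨t, ht, rfl⟩ i
    simpa using ht i (Set.mem_univ i)
  · intro h
    exact ⟨x - v, fun i _ => h i, by simp⟩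

lemma S_inter_null {m m' : Fin d → ℤ} (h : m ≠ m') :
    volume (((fun y => y + (2 * Real.pi) • castv m) '' Td d) ∩
      ((fun y => y + (2 * Real.pi) • castv m') '' Td d)) = 0 := by
  obtain ⟨i, hi⟩ : ∃ i, m i ≠ m' i := by
    by_contra hc
    push_neg at hc
    exact h (funext hc)
  have pi_pos := Real.pi_pos
  -- the key inequality fact, symmetric form
  have key : ∀ (a b : ℤ), a < b → ∀ x : Fin d → ℝ,
      x ∈ ((fun y => y + (2 * Real.pi) • castv m) '' Td d) ∩
        ((fun y => y + (2 * Real.pi) • castv m') '' Td d) →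
      (m i = a ∧ m' i = b) ∨ (m i = b ∧ m' i = a) → x i = Real.pi + 2 * Real.pi * a := by
    intro a b hab x ⟨hx1, hx2⟩ hcase
    rw [mem_shiftT] at hx1 hx2
    have h1 := hx1 i
    have h2 := hx2 i
    simp only [Pi.smul_apply, smul_eq_mul, castv, Set.mem_Icc] at h1 h2
    rcases hcase with ⟨ha, hb⟩ | ⟨ha, hb⟩
    · rw [ha] at h1; rw [hb] at h2
      have hba : (a : ℝ) + 1 ≤ b := by exact_mod_cast hab
      nlinarith [h1.1, h1.2, h2.1, h2.2]
    · rw [hb] at h2; rw [ha] at h1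
      have hba : (a : ℝ) + 1 ≤ b := by exact_mod_cast hab
      nlinarith [h1.1, h1.2, h2.1, h2.2]
  rcases lt_trichotomy (m i) (m' i) with hlt | heq | hgt
  · apply measure_mono_null (fun x hx => key _ _ hlt x hx (Or.inl ⟨rfl, rfl⟩))
    exact hyper_null i _
  · exact absurd heq hi
  · apply measure_mono_null (fun x hx => key _ _ hgt x hx (Or.inr ⟨rfl, rfl⟩))
    exact hyper_null i _

lemma exists_cover (y : Fin d → ℝ) :
    ∃ m : Fin d → ℤ, y ∈ (fun t => t + (2 * Real.pi) • castv m) '' Td d := by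
  have pi_pos := Real.pi_pos
  refine ⟨fun i => ⌊(y i + Real.pi) / (2 * Real.pi)⌋, ?_⟩
  rw [mem_shiftT]
  intro i
  set q : ℤ := ⌊(y i + Real.pi) / (2 * Real.pi)⌋ with hq
  have h1 : (q : ℝ) ≤ (y i + Real.pi) / (2 * Real.pi) := Int.floor_le _
  have h2 : (y i + Real.pi) / (2 * Real.pi) < q + 1 := Int.lt_floor_add_one _
  have hc : (0:ℝ) < 2 * Real.pi := by linarith
  rw [le_div_iff₀ hc] at h1
  rw [div_lt_iff₀ hc] at h2
  simp only [Pi.smul_apply, smul_eq_mul, castv, Set.mem_Icc, ← hq]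
  constructor <;> nlinarith

end Helpers

/-- with `Q₀ = ⋃_{μ∈K_B} B^{-1}(𝕋^d + 2μπ)`, the translates
`{Q₀ + 2kπ : k ∈ ℤ^d}` tile `ℝ^d` up to measure zero, and for every `f ∈ L¹(ℝ^d)`,
`∫_{ℝ^d} f = ∫_{Q₀} ∑_{k∈ℤ^d} f(x+2kπ) dx`. -/
theorem tiling_and_periodization {d : ℕ} (B : Matrix (Fin d) (Fin d) ℤ)
    (hB : IsDilationMatrix B) (K : Finset (Fin d → ℤ)) (hK : IsDigitSet B (K : Set (Fin d → ℤ))) :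
    let Bm : Matrix (Fin d) (Fin d) ℝ := B.map ((↑) : ℤ → ℝ)
    let T : Set (Fin d → ℝ) := Set.univ.pi fun _ => Set.Icc (-Real.pi) Real.pi
    let Q₀ : Set (Fin d → ℝ) :=
      ⋃ μ ∈ K, (fun x => Bm⁻¹.mulVec x) '' ((fun x => x + (2 * Real.pi) • castv μ) '' T)
    (∀ k k' : Fin d → ℤ, k ≠ k' →
        volume (((fun x => x + (2 * Real.pi) • castv k) '' Q₀) ∩
          ((fun x => x + (2 * Real.pi) • castv k') '' Q₀)) = 0) ∧
    volume ((⋃ k : Fin d → ℤ, (fun x => x + (2 * Real.pi) • castv k) '' Q₀)ᶜ) = 0 ∧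
    ∀ f : (Fin d → ℝ) → ℂ, Integrable f →
      ∫ x, f x = ∫ x in Q₀, ∑' k : Fin d → ℤ, f (x + (2 * Real.pi) • castv k) := by
  classical
  intro Bm T Q₀
  have hA : Bm.det ≠ 0 := det_ne_zero' hB
  set c : ℝ := 2 * Real.pi with hc
  set S : (Fin d → ℤ) → Set (Fin d → ℝ) :=
    fun m => (fun y => y + c • castv m) '' Helpers.Td d with hSdef
  set P : (Fin d → ℤ) → Set (Fin d → ℝ) := fun m => Bm.mulVec ⁻¹' (S m) with hPdef
  have hQ : Q₀ = ⋃ μ ∈ K, P μ := by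
    show (⋃ μ ∈ K, (fun x => Bm⁻¹.mulVec x) '' ((fun x => x + c • castv μ) '' T)) = _
    refine Set.iUnion₂_congr fun μ _ => ?_
    rw [Helpers.image_inv_eq_preimage hA]
    rfl
  have hPshift : ∀ (m k : Fin d → ℤ),
      (fun x => x + c • castv k) '' P m = P (m + B.mulVec k) := by
    intro m k
    rw [hPdef]
    simp only []
    rw [Helpers.shift_preimage]
    congr 1
    rw [hSdef]
    simp only []
    rw [Set.image_image]
    have hw : Bm.mulVec (c • castv k) = c • Bm.mulVec (castv k) := by
      rw [Matrix.mulVec_smul]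
    rw [hw]
    have : ∀ t : Fin d → ℝ,
        t + c • castv m + c • Bm.mulVec (castv k) = t + c • castv (m + B.mulVec k) := by
      intro t
      rw [Helpers.castv_add, Helpers.castv_mulVec, smul_add]
      abel
    simp only [this]
  have hPnull : ∀ m m', m ≠ m' → volume (P m ∩ P m') = 0 := by
    intro m m' h
    have h1 : P m ∩ P m' = Bm.mulVec ⁻¹' (S m ∩ S m') := by
      rw [hPdef, Set.preimage_inter]
    rw [h1]
    exact Helpers.preimage_null hA _ (Helpers.S_inter_null h)
  have hPc : ∀ x : Fin d → ℝ, ∃ m, x ∈ P m := by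
    intro x
    obtain ⟨m, hm⟩ := Helpers.exists_cover (Bm.mulVec x)
    exact ⟨m, hm⟩
  have hmneq : ∀ (μ μ' : Fin d → ℤ), μ ∈ K → μ' ∈ K → ∀ (k k' : Fin d → ℤ), k ≠ k' →
      μ + B.mulVec k ≠ μ' + B.mulVec k' := by
    intro μ μ' hμ hμ' k k' hkk heq
    obtain ⟨w, _, huniq⟩ := hK (μ + B.mulVec k)
    have e1 : μ = w := huniq μ ⟨hμ, k, by abel⟩
    have e2 : μ' = w := huniq μ' ⟨hμ', k', by rw [heq]; abel⟩
    have hμμ : μ = μ' := e1.trans e2.symm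
    rw [hμμ] at heq
    have heq2 := add_left_cancel heq
    apply hkk
    apply Helpers.castv_inj
    have : Bm.mulVec (castv k) = Bm.mulVec (castv k') := by
      rw [← Helpers.castv_mulVec, ← Helpers.castv_mulVec, heq2]
    calc castv k = Bm⁻¹.mulVec (Bm.mulVec (castv k)) := (Helpers.mulVec_left_inv hA _).symm
      _ = Bm⁻¹.mulVec (Bm.mulVec (castv k')) := by rw [this]
      _ = castv k' := Helpers.mulVec_left_inv hA _
  have part1 : ∀ k k' : Fin d → ℤ, k ≠ k' →
      volume (((fun x => x + c • castv k) '' Q₀) ∩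
        ((fun x => x + c • castv k') '' Q₀)) = 0 := by
    intro k k' hkk
    rw [hQ, Set.image_iUnion₂, Set.image_iUnion₂]
    simp_rw [hPshift]
    have hnull : volume (⋃ μ ∈ K, ⋃ μ' ∈ K,
        (P (μ + B.mulVec k) ∩ P (μ' + B.mulVec k'))) = 0 := by
      rw [← Finset.set_biUnion_coe, measure_biUnion_null_iff K.countable_toSet]
      intro μ hμ
      rw [← Finset.set_biUnion_coe, measure_biUnion_null_iff K.countable_toSet]
      intro μ' hμ'
      exact hPnull _ _ (hmneq μ μ' hμ hμ' k k' hkk)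
    refine measure_mono_null ?_ hnull
    rintro x ⟨hx1, hx2⟩
    rw [Set.mem_iUnion₂] at hx1 hx2
    obtain ⟨μ, hμ, h1⟩ := hx1
    obtain ⟨μ', hμ', h2⟩ := hx2
    exact Set.mem_iUnion₂.2 ⟨μ, hμ, Set.mem_iUnion₂.2 ⟨μ', hμ', h1, h2⟩⟩
  have hUuniv : (⋃ k : Fin d → ℤ, (fun x => x + c • castv k) '' Q₀) = Set.univ := by
    rw [Set.eq_univ_iff_forall]
    intro x
    obtain ⟨m, hm⟩ := hPc x
    obtain ⟨μ, ⟨hμK, q, hq⟩, _⟩ := hK m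
    rw [Set.mem_iUnion]
    refine ⟨q, ?_⟩
    rw [hQ, Set.image_iUnion₂]
    refine Set.mem_iUnion₂.2 ⟨μ, hμK, ?_⟩
    rw [hPshift]
    have hqm : μ + B.mulVec q = m := by rw [hq]; abel
    rwa [hqm]
  refine ⟨part1, ?_, ?_⟩
  · rw [hUuniv, Set.compl_univ, measure_empty]
  · intro f hf
    set v : (Fin d → ℤ) → (Fin d → ℝ) := fun k => c • castv k with hv
    have hPcomp : ∀ m, IsCompact (P m) := by
      intro m
      rw [hPdef]
      simp only []
      rw [← Helpers.image_inv_eq_preimage hA]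
      have hTc : IsCompact (Helpers.Td d) := isCompact_univ_pi fun _ => isCompact_Icc
      have hSc : IsCompact (S m) := hTc.image (continuous_add_right _)
      exact hSc.image ((Matrix.mulVecLin Bm⁻¹).continuous_of_finiteDimensional)
    have hQcomp : IsCompact Q₀ := by
      rw [hQ]
      exact K.isCompact_biUnion fun μ _ => hPcomp μ
    have hQmeas : MeasurableSet Q₀ := hQcomp.isClosed.measurableSet
    set s : (Fin d → ℤ) → Set (Fin d → ℝ) := fun k => (fun x => x + v k) '' Q₀ with hs
    have hsm : ∀ k, MeasurableSet (s k) := by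
      intro k
      exact (hQcomp.image (continuous_add_right _)).isClosed.measurableSet
    have hsae : Pairwise (Function.onFun (AEDisjoint volume) s) := fun k k' hkk => part1 k k' hkk
    have hsU : (⋃ k, s k) = Set.univ := hUuniv
    have hfint : IntegrableOn f (⋃ k, s k) volume := by
      rw [hsU]
      exact integrableOn_univ.mpr hf
    have stepA : ∫ x, f x = ∑' k, ∫ x in s k, f x := by
      rw [← setIntegral_univ, ← hsU]
      exact integral_iUnion_ae (fun k => (hsm k).nullMeasurableSet) hsae hfint
    have stepB : ∀ k, ∫ x in s k, f x = ∫ x in Q₀, f (x + v k) := fun k =>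
      (measurePreserving_add_right volume (v k)).setIntegral_image_emb
        (measurableEmbedding_addRight _) f Q₀
    have hmeas_k : ∀ k, AEStronglyMeasurable (fun x => f (x + v k)) (volume.restrict Q₀) := by
      intro k
      exact (hf.aestronglyMeasurable.comp_quasiMeasurePreserving
        (measurePreserving_add_right volume (v k)).quasiMeasurePreserving).restrict
    have hlsum : (∑' k, ∫⁻ x in Q₀, ‖f (x + v k)‖₊ ∂volume) ≠ ⊤ := by
      have heq : ∀ k, (∫⁻ x in Q₀, ‖f (x + v k)‖₊ ∂volume) = ∫⁻ y in s k, ‖f y‖₊ ∂volume :=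
        fun k => (measurePreserving_add_right volume (v k)).setLIntegral_comp_emb
          (measurableEmbedding_addRight _) (fun y => (‖f y‖₊ : ENNReal)) Q₀
      simp_rw [heq]
      rw [← lintegral_iUnion₀ (fun k => (hsm k).nullMeasurableSet) hsae, hsU,
        setLIntegral_univ]
      exact hf.2.ne
    have stepC : ∫ x in Q₀, ∑' k, f (x + v k) ∂volume = ∑' k, ∫ x in Q₀, f (x + v k) ∂volume :=
      integral_tsum hmeas_k hlsum
    rw [stepA, tsum_congr stepB, ← stepC]
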